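/- Let 𝓗 be a nonzero complex Hilbert space, Ψ ∈ 𝕊𝓗, and 𝔹₁(ℂΨ) = {ℂΩ ∈ ℙ𝓗 : ⟨Ψ, Ω⟩ ≠ 0} the open unit gap ball around ℂΨ. Then the map ρ_Ψ : p|_{𝕊𝓗}⁻¹(𝔹₁(ℂΨ)) → 𝔹₁(ℂΨ) × U(1), ρ_Ψ(Ω) = (ℂΩ, ⟨Ψ,Ω⟩/|⟨Ψ,Ω⟩|), is a homeomorphism whose composition with the projection onto the first factor equals p|_{𝕊𝓗}. Since such balls cover ℙ𝓗, the maps ρ_Ψ form a trivializing atlas exhibiting p|_{𝕊𝓗} : 𝕊𝓗 → ℙ𝓗 as a fiber bundle with typical fiber U(1). -/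

import Mathlib

noncomputable section

/-- Two nonzero vectors are equivalent iff they span the same complex line. -/
def projSetoid (H : Type*) [NormedAddCommGroup H] [InnerProductSpace ℂ H] :
    Setoid {v : H // v ≠ 0} where
  r Ψ Ω := ∃ c : ℂ, (Ω : H) = c • (Ψ : H)
  iseqv := by
    refine ⟨fun Ψ => ⟨1, (one_smul ℂ (Ψ : H)).symm⟩, ?_, ?_⟩
    · rintro Ψ Ω ⟨c, hc⟩
      have hc0 : c ≠ 0 := by
        intro h
        apply Ω.2
        rw [h, zero_smul] at hc
        exact hc
      exact ⟨c⁻¹, by rw [hc, smul_smul, inv_mul_cancel₀ hc0, one_smul]⟩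
    · rintro Ψ Ω Ξ ⟨c, hc⟩ ⟨d, hd⟩
      exact ⟨d * c, by rw [hd, hc, smul_smul]⟩

/-- The projective Hilbert space `ℙ𝓗`: the space of rays (one-dimensional subspaces). -/
def ProjH (H : Type*) [NormedAddCommGroup H] [InnerProductSpace ℂ H] :=
  Quotient (projSetoid H)

/-- The canonical projection `p : 𝓗∖{0} → ℙ𝓗`, `Ψ ↦ ℂΨ`. -/
def ProjH.mk {H : Type*} [NormedAddCommGroup H] [InnerProductSpace ℂ H]
    (v : {v : H // v ≠ 0}) : ProjH H :=
  Quotient.mk (projSetoid H) v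


/-- `ℙ𝓗` carries the quotient topology induced by the canonical projection. -/
instance (H : Type*) [NormedAddCommGroup H] [InnerProductSpace ℂ H] :
    TopologicalSpace (ProjH H) :=
  TopologicalSpace.coinduced ProjH.mk inferInstance

/-!
On `𝔹₁(ℂΨ)` every ray has exactly one unit representative with `⟨Ψ, ·⟩ > 0`. It is given by a
continuous formula on the open saturated set `{v | ⟨Ψ, v⟩ ≠ 0}`, so it depends continuously on
the ray, and `ρ_Ψ` has the continuous inverse `(ℂΩ, z) ↦ z • (that representative)`.
-/

section

variable {H : Type*} [NormedAddCommGroup H] [InnerProductSpace ℂ H]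

/-- The unit vector on the line `ℂ v` whose inner product with `Ψ` is positive
(`0` when `⟨Ψ, v⟩ = 0`). -/
def alignedRep (Ψ v : H) : H :=
  ((‖(inner ℂ Ψ v : ℂ)‖ : ℂ) / ((inner ℂ Ψ v : ℂ) * (‖v‖ : ℂ))) • v

lemma alignedRep_smul (Ψ v : H) {c : ℂ} (hc : c ≠ 0) : alignedRep Ψ (c • v) = alignedRep Ψ v := by
  by_cases hv : v = 0
  · simp [hv]
  have hvn : (‖v‖ : ℂ) ≠ 0 := by exact_mod_cast norm_ne_zero_iff.mpr hv
  have hcn : (‖c‖ : ℂ) ≠ 0 := by exact_mod_cast norm_ne_zero_iff.mpr hc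
  simp only [alignedRep, inner_smul_right, norm_smul, norm_mul, smul_smul, Complex.ofReal_mul]
  congr 1
  by_cases ht : (inner ℂ Ψ v : ℂ) = 0
  · simp [ht]
  field_simp

lemma norm_alignedRep (Ψ : H) {v : H} (hv : v ≠ 0) (ht : (inner ℂ Ψ v : ℂ) ≠ 0) :
    ‖alignedRep Ψ v‖ = 1 := by
  have hvn : ‖v‖ ≠ 0 := norm_ne_zero_iff.mpr hv
  have htn : ‖(inner ℂ Ψ v : ℂ)‖ ≠ 0 := norm_ne_zero_iff.mpr ht
  simp only [alignedRep, norm_smul, norm_div, norm_mul, Complex.norm_real, norm_norm]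
  field_simp

lemma inner_alignedRep (Ψ : H) {v : H} (ht : (inner ℂ Ψ v : ℂ) ≠ 0) :
    (inner ℂ Ψ (alignedRep Ψ v) : ℂ) = ((‖(inner ℂ Ψ v : ℂ)‖ / ‖v‖ : ℝ) : ℂ) := by
  simp only [alignedRep, inner_smul_right, Complex.ofReal_div]
  field_simp

lemma phase_smul_alignedRep (Ψ : H) {Ω : H} (hΩ : ‖Ω‖ = 1) (ht : (inner ℂ Ψ Ω : ℂ) ≠ 0) :
    ((inner ℂ Ψ Ω : ℂ) / (‖(inner ℂ Ψ Ω : ℂ)‖ : ℂ)) • alignedRep Ψ Ω = Ω := by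
  have htn : (‖(inner ℂ Ψ Ω : ℂ)‖ : ℂ) ≠ 0 := by exact_mod_cast norm_ne_zero_iff.mpr ht
  rw [alignedRep, smul_smul, hΩ, Complex.ofReal_one, mul_one,
    show _ * _ = (1 : ℂ) by field_simp, one_smul]

lemma norm_div_norm_self {z : ℂ} (hz : z ≠ 0) : ‖z / (‖z‖ : ℂ)‖ = 1 := by
  rw [norm_div, Complex.norm_real, norm_norm, div_self (norm_ne_zero_iff.mpr hz)]

lemma mul_ofReal_div_norm {z : ℂ} (hz : ‖z‖ = 1) {r : ℝ} (hr : 0 < r) :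
    z * r / (‖z * r‖ : ℂ) = z := by
  rw [norm_mul, hz, one_mul, Complex.norm_real, Real.norm_of_nonneg hr.le,
    mul_div_cancel_right₀ _ (Complex.ofReal_ne_zero.mpr hr.ne')]

namespace ProjH

lemma isQuotientMap_mk : Topology.IsQuotientMap (ProjH.mk : {v : H // v ≠ 0} → ProjH H) :=
  isQuotientMap_quotient_mk'

lemma mk_smul (v : {v : H // v ≠ 0}) {c : ℂ} (hc : c ≠ 0) (hcv : c • (v : H) ≠ 0) :
    ProjH.mk ⟨c • (v : H), hcv⟩ = ProjH.mk v :=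
  Quotient.sound ⟨c⁻¹, by simp [smul_smul, inv_mul_cancel₀ hc]⟩

/-- The open unit gap ball `𝔹₁(ℂΨ)`. -/
def gapBall (Ψ : H) : Set (ProjH H) :=
  {a | ∃ v : {v : H // v ≠ 0}, ProjH.mk v = a ∧ (inner ℂ Ψ (v : H) : ℂ) ≠ 0}

lemma mk_mem_gapBall_iff (Ψ : H) (v : {v : H // v ≠ 0}) :
    ProjH.mk v ∈ gapBall Ψ ↔ (inner ℂ Ψ (v : H) : ℂ) ≠ 0 := by
  refine ⟨?_, fun h => ⟨v, rfl, h⟩⟩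
  rintro ⟨w, hw, hwt⟩
  obtain ⟨c, hc⟩ := Quotient.exact hw.symm
  rw [hc, inner_smul_right] at hwt
  exact right_ne_zero_of_mul hwt

lemma isOpen_gapBall (Ψ : H) : IsOpen (gapBall Ψ) := by
  have : ProjH.mk ⁻¹' gapBall Ψ = {v : {v : H // v ≠ 0} | (inner ℂ Ψ (v : H) : ℂ) ≠ 0} :=
    Set.ext (mk_mem_gapBall_iff Ψ)
  rw [← isQuotientMap_mk.isOpen_preimage, this]
  exact isOpen_ne_fun (continuous_const.inner continuous_subtype_val) continuous_const

lemma exists_mem_gapBall (a : ProjH H) : ∃ Ψ : H, ‖Ψ‖ = 1 ∧ a ∈ gapBall Ψ := by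
  obtain ⟨v, rfl⟩ := Quotient.exists_rep a
  have hvn : ‖(v : H)‖ ≠ 0 := norm_ne_zero_iff.mpr v.2
  refine ⟨((‖(v : H)‖ : ℂ))⁻¹ • (v : H), ?_, (mk_mem_gapBall_iff _ v).mpr ?_⟩
  · rw [norm_smul, norm_inv, Complex.norm_real, norm_norm, inv_mul_cancel₀ hvn]
  · rw [inner_smul_left, inner_self_eq_norm_sq_to_K]
    simpa using hvn

def alignedRep (Ψ : H) : ProjH H → H :=
  Quotient.lift (fun v : {v : H // v ≠ 0} => _root_.alignedRep Ψ (v : H)) <| by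
    rintro v w ⟨c, hc⟩
    rw [hc, alignedRep_smul Ψ _ (left_ne_zero_of_smul (hc ▸ w.2))]

lemma alignedRep_mk (Ψ : H) (v : {v : H // v ≠ 0}) :
    alignedRep Ψ (ProjH.mk v) = _root_.alignedRep Ψ (v : H) := rfl

lemma continuousOn_alignedRep (Ψ : H) : ContinuousOn (alignedRep Ψ) (gapBall Ψ) := by
  rw [isQuotientMap_mk.continuousOn_isOpen_iff (isOpen_gapBall Ψ)]
  intro v hv
  have ht : (inner ℂ Ψ (v : H) : ℂ) ≠ 0 := (mk_mem_gapBall_iff Ψ v).mp hv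
  refine ContinuousAt.continuousWithinAt (ContinuousAt.smul ?_ continuous_subtype_val.continuousAt)
  refine ContinuousAt.div (by fun_prop) (by fun_prop) (mul_ne_zero ht ?_)
  exact_mod_cast norm_ne_zero_iff.mpr v.2

lemma norm_alignedRep (Ψ : H) {a : ProjH H} (ha : a ∈ gapBall Ψ) : ‖alignedRep Ψ a‖ = 1 := by
  obtain ⟨v, rfl, ht⟩ := ha
  exact _root_.norm_alignedRep Ψ v.2 ht

lemma exists_pos_inner_alignedRep (Ψ : H) {a : ProjH H} (ha : a ∈ gapBall Ψ) :
    ∃ r : ℝ, 0 < r ∧ (inner ℂ Ψ (alignedRep Ψ a) : ℂ) = r := by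
  obtain ⟨v, rfl, ht⟩ := ha
  exact ⟨_, div_pos (norm_pos_iff.mpr ht) (norm_pos_iff.mpr v.2), inner_alignedRep Ψ ht⟩

lemma mk_alignedRep (Ψ : H) {a : ProjH H} (ha : a ∈ gapBall Ψ) {c : ℂ}
    (h : c • alignedRep Ψ a ≠ 0) : ProjH.mk ⟨c • alignedRep Ψ a, h⟩ = a := by
  obtain ⟨v, rfl, ht⟩ := ha
  simp_rw [alignedRep_mk, _root_.alignedRep, smul_smul] at h ⊢
  exact mk_smul v (left_ne_zero_of_smul h) h

end ProjH

/-- `p|_{𝕊𝓗}⁻¹(𝔹₁(ℂΨ))`. -/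
def sphereOffPerp (Ψ : H) : Set H :=
  {Ω | ‖Ω‖ = 1 ∧ (inner ℂ Ψ Ω : ℂ) ≠ 0}

lemma ne_zero_of_mem_sphereOffPerp {Ψ Ω : H} (hΩ : Ω ∈ sphereOffPerp Ψ) : Ω ≠ 0 :=
  ne_zero_of_norm_ne_zero (hΩ.1 ▸ one_ne_zero)

lemma smul_mem_sphereOffPerp (Ψ : H) {a : ProjH H} (ha : a ∈ ProjH.gapBall Ψ)
    (z : Metric.sphere (0 : ℂ) 1) : (z : ℂ) • ProjH.alignedRep Ψ a ∈ sphereOffPerp Ψ := by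
  have hz : ‖(z : ℂ)‖ = 1 := mem_sphere_zero_iff_norm.mp z.2
  obtain ⟨r, hr, hinner⟩ := ProjH.exists_pos_inner_alignedRep Ψ ha
  refine ⟨by rw [norm_smul, hz, one_mul, ProjH.norm_alignedRep Ψ ha], ?_⟩
  rw [inner_smul_right, hinner]
  exact mul_ne_zero (ne_zero_of_mem_unit_sphere z)
    (Complex.ofReal_ne_zero.mpr hr.ne')

/-- The local trivialization `ρ_Ψ(Ω) = (ℂΩ, ⟨Ψ,Ω⟩/|⟨Ψ,Ω⟩|)`. -/
def gapBallTrivialization (Ψ : H) :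
    sphereOffPerp Ψ ≃ₜ ProjH.gapBall Ψ × Metric.sphere (0 : ℂ) 1 where
  toFun Ω :=
    (⟨ProjH.mk ⟨Ω, ne_zero_of_mem_sphereOffPerp Ω.2⟩, _, rfl, Ω.2.2⟩,
      ⟨(inner ℂ Ψ (Ω : H) : ℂ) / (‖(inner ℂ Ψ (Ω : H) : ℂ)‖ : ℂ),
        mem_sphere_zero_iff_norm.mpr (norm_div_norm_self Ω.2.2)⟩)
  invFun x := ⟨(x.2 : ℂ) • ProjH.alignedRep Ψ x.1, smul_mem_sphereOffPerp Ψ x.1.2 x.2⟩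
  left_inv Ω := Subtype.ext (phase_smul_alignedRep Ψ Ω.2.1 Ω.2.2)
  right_inv x := by
    obtain ⟨r, hr, hinner⟩ := ProjH.exists_pos_inner_alignedRep Ψ x.1.2
    refine Prod.ext (Subtype.ext (ProjH.mk_alignedRep Ψ x.1.2 _)) (Subtype.ext ?_)
    change _ / _ = (x.2 : ℂ)
    rw [inner_smul_right, hinner]
    exact mul_ofReal_div_norm (mem_sphere_zero_iff_norm.mp x.2.2) hr
  continuous_toFun := by
    have hinner : Continuous fun Ω : sphereOffPerp Ψ => (inner ℂ Ψ (Ω : H) : ℂ) :=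
      continuous_const.inner continuous_subtype_val
    refine .prodMk (.subtype_mk ?_ _) (.subtype_mk ?_ _)
    · exact continuous_coinduced_rng.comp (continuous_subtype_val.subtype_mk _)
    · refine hinner.div (by fun_prop) fun Ω => ?_
      exact Complex.ofReal_ne_zero.mpr (norm_ne_zero_iff.mpr Ω.2.2)
  continuous_invFun := by
    refine .subtype_mk (.smul (by fun_prop) ?_) _
    exact (ProjH.continuousOn_alignedRep Ψ).comp_continuous (by fun_prop) fun x => x.1.2

end

/-- For each unit vector `Ψ`, the map `ρ_Ψ(Ω) = (ℂΩ, ⟨Ψ,Ω⟩/|⟨Ψ,Ω⟩|)` is a homeomorphism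
from `p|_{𝕊𝓗}⁻¹(𝔹₁(ℂΨ)) = 𝕊𝓗 ∖ (𝕊𝓗 ∩ ℂΨ^⊥)` onto `𝔹₁(ℂΨ) × U(1)` commuting with the
projections onto `𝔹₁(ℂΨ)`; moreover the gap balls `𝔹₁(ℂΨ)` cover `ℙ𝓗`, so these maps form a
trivializing atlas exhibiting `p|_{𝕊𝓗} : 𝕊𝓗 → ℙ𝓗` as a fiber bundle with typical fiber
`U(1)`. -/
theorem sphere_circle_bundle_trivialization (H : Type*) [NormedAddCommGroup H]
    [InnerProductSpace ℂ H]
    (Ψ : H) :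
    (∃ ρ : {Ω : H // ‖Ω‖ = 1 ∧ (inner ℂ Ψ Ω : ℂ) ≠ 0} ≃ₜ
        ({a : ProjH H //
            ∃ v : {v : H // v ≠ 0}, ProjH.mk v = a ∧ (inner ℂ Ψ (v : H) : ℂ) ≠ 0}
          × Metric.sphere (0 : ℂ) 1),
      ∀ Ω : {Ω : H // ‖Ω‖ = 1 ∧ (inner ℂ Ψ Ω : ℂ) ≠ 0},
        -- the first component of ρ Ω is the ray ℂΩ (so ρ commutes with the projections)
        (((ρ Ω).1 : ProjH H) = ProjH.mk ⟨(Ω : H), by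
            intro h0
            have h1 := Ω.2.1
            rw [h0] at h1
            simp at h1⟩) ∧
        -- the second component is the phase ⟨Ψ,Ω⟩/|⟨Ψ,Ω⟩|
        ((ρ Ω).2 : ℂ) = (inner ℂ Ψ (Ω : H) : ℂ) / (‖(inner ℂ Ψ (Ω : H) : ℂ)‖ : ℂ)) ∧
    -- the open unit gap balls 𝔹₁(ℂΨ') cover ℙ𝓗
    (∀ a : ProjH H, ∃ Ψ' : H, ‖Ψ'‖ = 1 ∧
      ∃ v : {v : H // v ≠ 0}, ProjH.mk v = a ∧ (inner ℂ Ψ' (v : H) : ℂ) ≠ 0) :=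
  ⟨⟨gapBallTrivialization Ψ, fun _ => ⟨rfl, rfl⟩⟩, ProjH.exists_mem_gapBall⟩

end
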